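/- arXiv:2306.07675 — 3 statements merged into one kernel-verified Lean document; each statement's English description precedes it below -/
import Mathlib

section
/- Every preferred extension of a finite AF is a complete extension. -/
def conflictFree {α : Type*} (R : α → α → Prop) (E : Set α) : Prop :=
  ∀ a ∈ E, ∀ b ∈ E, ¬ R a b

def defends {α : Type*} (R : α → α → Prop) (E : Set α) (a : α) : Prop :=
  ∀ b, R b a → ∃ c ∈ E, R c b

def admissible {α : Type*} (R : α → α → Prop) (E : Set α) : Prop :=
  conflictFree R E ∧ ∀ a ∈ E, defends R E a

def complete {α : Type*} (R : α → α → Prop) (E : Set α) : Prop :=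
  admissible R E ∧ ∀ a, defends R E a → a ∈ E

def stable {α : Type*} (R : α → α → Prop) (E : Set α) : Prop :=
  conflictFree R E ∧ ∀ a, a ∉ E → ∃ b ∈ E, R b a

def preferred {α : Type*} (R : α → α → Prop) (E : Set α) : Prop :=
  admissible R E ∧ ∀ E', admissible R E' → E ⊆ E' → E' = E

def grounded {α : Type*} (R : α → α → Prop) (E : Set α) : Prop :=
  complete R E ∧ ∀ E', complete R E' → E' ⊆ E → E' = E

theorem preferred_is_complete {α : Type*} [Fintype α] (R : α → α → Prop) (E : Set α)
    (h : preferred R E) : complete R E := by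
  obtain ⟨⟨hcf, hdef⟩, hmax⟩ := h
  set F : Set α := E ∪ {a | defends R E a} with hF
  have hEF : E ⊆ F := Set.subset_union_left
  -- any member of F is defended by E
  have hFdef : ∀ a ∈ F, defends R E a := by
    intro a ha
    rcases ha with ha | ha
    · exact hdef a ha
    · exact ha
  have hFcf : conflictFree R F := by
    intro a ha b hb hab
    have hbdef := hFdef b hb
    obtain ⟨c, hc, hca⟩ := hbdef a hab
    have hadef := hFdef a ha
    obtain ⟨d, hd, hdc⟩ := hadef c hca
    exact hcf d hd c hc hdc
  have hFadm : admissible R F := by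
    refine ⟨hFcf, fun a ha b hba => ?_⟩
    obtain ⟨c, hc, hcb⟩ := hFdef a ha b hba
    exact ⟨c, hEF hc, hcb⟩
  have hFE : F = E := hmax F hFadm hEF
  refine ⟨⟨hcf, hdef⟩, fun a ha => ?_⟩
  have : a ∈ F := Or.inr ha
  rwa [hFE] at this
end

section
/- Dung's Fundamental Lemma: if E is an admissible set of an AF and argument a is defended by E, then E ∪ {a} is admissible, and moreover any argument b defended by E is also defended by E ∪ {a}. -/
theorem fundamental_lemma {α : Type*} (R : α → α → Prop) (E : Set α) (a : α)
    (hE : admissible R E) (ha : defends R E a) :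
    admissible R (E ∪ {a}) ∧ ∀ b, defends R E b → defends R (E ∪ {a}) b := by
  obtain ⟨hcf, hdef⟩ := hE
  have hnoEa : ∀ x ∈ E, ¬ R x a := by
    intro x hx hxa
    obtain ⟨c, hc, hcx⟩ := ha x hxa
    exact hcf c hc x hx hcx
  have hnoaE : ∀ x ∈ E, ¬ R a x := by
    intro x hx hax
    obtain ⟨c, hc, hca⟩ := hdef x hx a hax
    exact hnoEa c hc hca
  have hmono : ∀ b, defends R E b → defends R (E ∪ {a}) b := by
    intro b hb x hxb
    obtain ⟨c, hc, hcx⟩ := hb x hxb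
    exact ⟨c, Or.inl hc, hcx⟩
  refine ⟨⟨?_, ?_⟩, hmono⟩
  · rintro x (hx | rfl) y (hy | rfl)
    · exact hcf x hx y hy
    · exact hnoEa x hx
    · exact hnoaE y hy
    · intro hxx
      obtain ⟨c, hc, hcx⟩ := ha _ hxx
      exact hnoEa c hc hcx
  · rintro x (hx | rfl)
    · exact hmono x (hdef x hx)
    · exact hmono _ ha
end

section
/- If E is a complete extension of an AF, then the labelling assigning 'in' to members of E, 'out' to arguments attacked by E, and 'undec' to all other arguments is a reinstatement labelling. -/
inductive Label where
  | inn : Label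
  | out : Label
  | undec : Label

open Classical in
theorem complete_gives_reinstatement {α : Type*} (R : α → α → Prop) (E : Set α)
    (hE : complete R E) (L : α → Label)
    (hL : ∀ a, L a = if a ∈ E then Label.inn
                     else if a ∈ {b | ∃ c ∈ E, R c b} then Label.out
                     else Label.undec) :
    (∀ a b, L a = Label.inn → R b a → L b = Label.out) ∧
    (∀ a, L a = Label.out → ∃ b, L b = Label.inn ∧ R b a) := by
  obtain ⟨⟨hcf, hadm⟩, hcomp⟩ := hE
  constructor
  · intro a b ha hba
    rw [hL a] at ha
    by_cases haE : a ∈ E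
    · have := hadm a haE b hba
      obtain ⟨c, hcE, hcb⟩ := this
      rw [hL b]
      by_cases hbE : b ∈ E
      · exact absurd hcb (hcf c hcE b hbE)
      · simp only [if_neg hbE]
        exact if_pos (show b ∈ {b | ∃ c ∈ E, R c b} from ⟨c, hcE, hcb⟩)
    · simp [haE] at ha
      split at ha <;> simp_all
  · intro a ha
    rw [hL a] at ha
    split at ha
    · exact Label.noConfusion ha
    · split at ha
      · next hmem =>
        obtain ⟨c, hcE, hca⟩ := hmem
        exact ⟨c, by rw [hL c]; simp [hcE], hca⟩
      · exact Label.noConfusion ha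
end
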